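/- Postoptimality: Let M be a loopless matroid and x, x' : E → ℝ two weightings differing only at a single element e. Then mwb(M,x') - mwb(M,x) = b_e(x') - b_e(x), where b_e(z) := min{z(e), μ_e(z)} is the bottleneck weight of e under z. -/

import Mathlib

open Matroid Set

variable {α : Type*}

/-- A circuit of a matroid: a minimal dependent set. -/
def Matroid.IsCircuitDef (M : Matroid α) (C : Set α) : Prop :=
  M.Dep C ∧ ∀ ⦃D⦄, D ⊂ C → M.Indep D

/-- Looplessness in the sense of the paper: no element is a loop
(every singleton of the ground set is independent) and no element is a
coloop (no element lies in all bases). -/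
def Matroid.PaperLoopless (M : Matroid α) : Prop :=
  ∀ e ∈ M.E, M.Indep {e} ∧ ∃ B, M.IsBase B ∧ e ∉ B

/-- The weight `x(B)` of a set of ground elements. -/
noncomputable def setWeight (x : α → ℝ) (B : Set α) : ℝ := ∑ᶠ e ∈ B, x e

/-- The min-max weight `μ_e(x)`: the minimum over circuits `C` containing `e`
of the maximum weight of an element of `C - e`. -/
noncomputable def muWeight (M : Matroid α) (x : α → ℝ) (e : α) : ℝ :=
  sInf {w | ∃ C, M.IsCircuitDef C ∧ e ∈ C ∧ w = sSup (x '' (C \ {e}))}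

/-- The bottleneck weight `b_e(x) = min {x(e), μ_e(x)}`. -/
noncomputable def bottleneck (M : Matroid α) (x : α → ℝ) (e : α) : ℝ :=
  min (x e) (muWeight M x e)

/-- The minimum weight of a basis of `M`. -/
noncomputable def mwb (M : Matroid α) (x : α → ℝ) : ℝ :=
  sInf {w | ∃ B, M.IsBase B ∧ w = setWeight x B}

/-- `B` is an `x`-optimal basis of `M`. -/
def IsOptimalBase (M : Matroid α) (x : α → ℝ) (B : Set α) : Prop :=
  M.IsBase B ∧ ∀ B', M.IsBase B' → setWeight x B ≤ setWeight x B'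

/-- Deletion of a single element. -/
noncomputable def Matroid.del (M : Matroid α) (e : α) : Matroid α :=
  M ↾ (M.E \ {e})

/-- Contraction of a single element, defined by duality: `M/e = (M✶ \ e)✶`. -/
noncomputable def Matroid.con (M : Matroid α) (e : α) : Matroid α :=
  ((M✶ ↾ (M.E \ {e}))✶)

/-!
Contracting `e` splits off its bottleneck weight: `mwb(M, x) = mwb(M / e, x) + b_e(x)`.
An optimal basis of `M / e` extends to a basis of `M` by `e` itself, or, by the exchange
property, by some element of a circuit through `e` attaining `μ_e(x)`. Conversely, an optimal
basis of `M` either contains `e`, or loses its heaviest fundamental-circuit element `f ≠ e` to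
`e` and leaves a basis of `M / e` of weight at most `mwb(M, x) - μ_e(x)`. Since `M / e` does not
see the weight of `e`, the difference of the two sides under `x` and `x'` is `b_e(x') - b_e(x)`.
-/

namespace Matroid

variable {M : Matroid α} {B C : Set α} {e f : α}

lemma isCircuitDef_iff : M.IsCircuitDef C ↔ M.IsCircuit C :=
  isCircuit_iff_forall_ssubset.symm

lemma PaperLoopless.isNonloop (hM : M.PaperLoopless) (he : e ∈ M.E) : M.IsNonloop e :=
  indep_singleton.1 (hM e he).1

lemma PaperLoopless.not_isColoop (hM : M.PaperLoopless) (he : e ∈ M.E) : ¬ M.IsColoop e := by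
  obtain ⟨B, hB, heB⟩ := (hM e he).2
  exact fun h ↦ heB (isColoop_iff_forall_mem_isBase.1 h hB)

lemma IsNonloop.contract_singleton_isBase_iff (he : M.IsNonloop e) :
    (M ／ {e}).IsBase B ↔ e ∉ B ∧ M.IsBase (insert e B) := by
  rw [he.indep.contract_isBase_iff, union_singleton, disjoint_singleton_right, and_comm]

lemma IsBase.exists_insert_isBase_of_mem_isCircuit (hB : M.IsBase (insert e B)) (heB : e ∉ B)
    (hC : M.IsCircuit C) (heC : e ∈ C) : ∃ f ∈ C \ {e}, f ∉ B ∧ M.IsBase (insert f B) := by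
  have hBi : M.Indep B := hB.indep.subset (subset_insert e B)
  obtain ⟨f, hfC, hfcl⟩ : ∃ f ∈ C \ {e}, f ∉ M.closure B := by
    refine not_subset.1 fun hsub ↦ ((hBi.insert_indep_iff_of_notMem heB).1 hB.indep).2 ?_
    exact M.closure_subset_closure_of_subset_closure hsub
      (hC.mem_closure_sdiff_singleton_of_mem heC)
  have hfB : f ∉ B := fun h ↦ hfcl (M.subset_closure B hBi.subset_ground h)
  have hfi : M.Indep (insert f B) :=
    (hBi.insert_indep_iff_of_notMem hfB).2 ⟨hC.subset_ground hfC.1, hfcl⟩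
  exact ⟨f, hfC, hfB, insert_isBase_of_insert_indep heB hfB hB hfi⟩

lemma IsBase.insert_sdiff_isBase_of_mem_fundCircuit (hB : M.IsBase B) (he : e ∈ M.E)
    (heB : e ∉ B) (hf : f ∈ M.fundCircuit e B \ {e}) : M.IsBase (insert e (B \ {f})) := by
  have hfB : f ∈ B := (M.fundCircuit_subset_insert e B hf.1).resolve_left hf.2
  have hi : M.Indep (insert e B \ {f}) :=
    (hB.indep.mem_fundCircuit_iff (by rwa [hB.closure_eq]) heB).1 hf.1
  rw [insert_sdiff_singleton_comm (ne_of_mem_of_not_mem hfB heB).symm]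
  exact hB.exchange_isBase_of_indep' hfB heB hi

end Matroid

section Weights

variable {M : Matroid α} {x x' : α → ℝ} {B C : Set α} {e f : α}

lemma setWeight_insert (x : α → ℝ) (hB : B.Finite) (he : e ∉ B) :
    setWeight x (insert e B) = x e + setWeight x B :=
  finsum_mem_insert x he hB

lemma setWeight_eq_add_sdiff (x : α → ℝ) (hB : B.Finite) (hf : f ∈ B) :
    setWeight x B = x f + setWeight x (B \ {f}) := by
  rw [← setWeight_insert x hB.sdiff (fun h : f ∈ B \ {f} ↦ h.2 rfl), insert_sdiff_singleton,
    insert_eq_of_mem hf]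

lemma setWeight_congr (h : ∀ f ∈ B, x' f = x f) : setWeight x' B = setWeight x B :=
  finsum_mem_congr rfl h

lemma mwb_congr (h : ∀ f ∈ M.E, x' f = x f) : mwb M x' = mwb M x := by
  unfold mwb
  congr 1
  ext w
  refine exists_congr fun B ↦ and_congr_right fun hB ↦ ?_
  rw [setWeight_congr fun f hf ↦ h f (hB.subset_ground hf)]

lemma exists_isOptimalBase (M : Matroid α) [M.Finite] (x : α → ℝ) :
    ∃ B, IsOptimalBase M x B := by
  have hfin : Set.Finite {B | M.IsBase B} :=
    M.ground_finite.finite_subsets.subset fun B hB ↦ hB.subset_ground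
  exact exists_min_image _ (setWeight x) hfin M.exists_isBase

lemma IsOptimalBase.setWeight_eq_mwb (hB : IsOptimalBase M x B) : setWeight x B = mwb M x := by
  have hleast : IsLeast {w | ∃ B, M.IsBase B ∧ w = setWeight x B} (setWeight x B) :=
    ⟨⟨B, hB.1, rfl⟩, by rintro _ ⟨B', hB', rfl⟩; exact hB.2 B' hB'⟩
  exact hleast.csInf_eq.symm

lemma mwb_le_setWeight [M.Finite] (hB : M.IsBase B) : mwb M x ≤ setWeight x B := by
  obtain ⟨B₀, hB₀⟩ := exists_isOptimalBase M x
  exact hB₀.setWeight_eq_mwb ▸ hB₀.2 B hB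

end Weights

section MuWeight

lemma finite_circuit_sSup_weights (M : Matroid α) [M.Finite] (x : α → ℝ) (e : α) :
    Set.Finite {w | ∃ C, M.IsCircuitDef C ∧ e ∈ C ∧ w = sSup (x '' (C \ {e}))} := by
  refine (M.ground_finite.finite_subsets.image fun C ↦ sSup (x '' (C \ {e}))).subset ?_
  rintro _ ⟨C, hC, -, rfl⟩
  exact mem_image_of_mem _ hC.1.subset_ground

variable {M : Matroid α} [M.Finite] {C : Set α} {e : α}

lemma Matroid.IsCircuit.exists_muWeight_le (hC : M.IsCircuit C) (heC : e ∈ C)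
    (he : M.IsNonloop e) (x : α → ℝ) : ∃ f ∈ C \ {e}, muWeight M x e ≤ x f := by
  have hne : (C \ {e}).Nonempty := sdiff_nonempty.2 fun hCe ↦
    hC.not_indep (he.indep.subset hCe)
  obtain ⟨f, hf, hfmax⟩ :=
    (hne.image x).csSup_mem ((M.set_finite C hC.subset_ground).sdiff.image x)
  refine ⟨f, hf, hfmax ▸ csInf_le (finite_circuit_sSup_weights M x e).bddBelow ?_⟩
  exact ⟨C, isCircuitDef_iff.2 hC, heC, rfl⟩

lemma exists_isCircuit_forall_le_muWeight (he : e ∈ M.E) (he' : ¬ M.IsColoop e)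
    (x : α → ℝ) : ∃ C, M.IsCircuit C ∧ e ∈ C ∧ ∀ f ∈ C \ {e}, x f ≤ muWeight M x e := by
  obtain ⟨C₀, hC₀, heC₀⟩ : ∃ C, M.IsCircuit C ∧ e ∈ C := by
    simpa [isColoop_iff_forall_notMem_isCircuit he] using he'
  obtain ⟨C, hC, heC, hμ⟩ := Nonempty.csInf_mem
    (by exact ⟨_, C₀, isCircuitDef_iff.2 hC₀, heC₀, rfl⟩) (finite_circuit_sSup_weights M x e)
  refine ⟨C, isCircuitDef_iff.1 hC, heC, fun f hf ↦ ?_⟩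
  rw [muWeight, hμ]
  exact le_csSup ((M.set_finite C hC.1.subset_ground).sdiff.image x).bddAbove
    (mem_image_of_mem x hf)

end MuWeight

section Postoptimality

variable {M : Matroid α} [M.Finite] {e : α}

lemma mwb_le_mwb_contract_add_bottleneck (he : M.IsNonloop e) (he' : ¬ M.IsColoop e)
    (x : α → ℝ) : mwb M x ≤ mwb (M ／ {e}) x + bottleneck M x e := by
  obtain ⟨B, hBopt⟩ := exists_isOptimalBase (M ／ {e}) x
  obtain ⟨heB, hB⟩ := he.contract_singleton_isBase_iff.1 hBopt.1
  have hBfin : B.Finite := M.set_finite B ((subset_insert e B).trans hB.subset_ground)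
  rw [← hBopt.setWeight_eq_mwb, ← sub_le_iff_le_add', bottleneck]
  refine le_min ?_ ?_
  · have hle := mwb_le_setWeight (x := x) hB
    rw [setWeight_insert x hBfin heB] at hle
    linarith
  · obtain ⟨C, hC, heC, hCμ⟩ := exists_isCircuit_forall_le_muWeight he.mem_ground he' x
    obtain ⟨f, hf, hfB, hfbase⟩ := hB.exists_insert_isBase_of_mem_isCircuit heB hC heC
    have hle := mwb_le_setWeight (x := x) hfbase
    rw [setWeight_insert x hBfin hfB] at hle
    linarith [hCμ f hf]

lemma mwb_contract_add_bottleneck_le_mwb (he : M.IsNonloop e) (x : α → ℝ) :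
    mwb (M ／ {e}) x + bottleneck M x e ≤ mwb M x := by
  obtain ⟨B, hBopt⟩ := exists_isOptimalBase M x
  have hBfin : B.Finite := M.set_finite B hBopt.1.subset_ground
  rw [← hBopt.setWeight_eq_mwb, bottleneck]
  by_cases heB : e ∈ B
  · have hB' : (M ／ {e}).IsBase (B \ {e}) := he.contract_singleton_isBase_iff.2
      ⟨fun h ↦ h.2 rfl, by rw [insert_sdiff_singleton, insert_eq_of_mem heB]; exact hBopt.1⟩
    rw [setWeight_eq_add_sdiff x hBfin heB]
    linarith [mwb_le_setWeight (x := x) hB', min_le_left (x e) (muWeight M x e)]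
  · obtain ⟨f, hf, hfμ⟩ := (hBopt.1.fundCircuit_isCircuit he.mem_ground heB).exists_muWeight_le
      (M.mem_fundCircuit e B) he x
    have hfB : f ∈ B := (M.fundCircuit_subset_insert e B hf.1).resolve_left hf.2
    have hB' : (M ／ {e}).IsBase (B \ {f}) := he.contract_singleton_isBase_iff.2
      ⟨fun h ↦ heB h.1, hBopt.1.insert_sdiff_isBase_of_mem_fundCircuit he.mem_ground heB hf⟩
    rw [setWeight_eq_add_sdiff x hBfin hfB]
    linarith [mwb_le_setWeight (x := x) hB', min_le_right (x e) (muWeight M x e)]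

theorem mwb_eq_mwb_contract_add_bottleneck (he : M.IsNonloop e) (he' : ¬ M.IsColoop e)
    (x : α → ℝ) : mwb M x = mwb (M ／ {e}) x + bottleneck M x e :=
  (mwb_le_mwb_contract_add_bottleneck he he' x).antisymm
    (mwb_contract_add_bottleneck_le_mwb he x)

end Postoptimality

/-- postoptimality for a change of a single weight. -/
theorem stmt12 (M : Matroid α) [M.Finite] (hM : M.PaperLoopless)
    (x x' : α → ℝ) {e : α} (he : e ∈ M.E)
    (hdiff : ∀ f, f ≠ e → x' f = x f) :
    mwb M x' - mwb M x = bottleneck M x' e - bottleneck M x e := by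
  have hnl := hM.isNonloop he
  have hnc := hM.not_isColoop he
  have hcontract : mwb (M ／ {e}) x' = mwb (M ／ {e}) x :=
    mwb_congr fun f hf ↦ hdiff f hf.2
  rw [mwb_eq_mwb_contract_add_bottleneck hnl hnc x, mwb_eq_mwb_contract_add_bottleneck hnl hnc x',
    hcontract]
  ring
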